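/- Let φ be an HML formula (in negation normal form) and let p1, p2 be processes with p1 ⊨ φ and p2 ⊨ φ. If every two processes satisfying φ are simulation equivalent (i.e., for all p, q: p ⊨ φ and q ⊨ φ imply p ≡_S q), then depth(p1) = depth(p2) ≤ md(φ). -/

import Mathlib

/-- Finite, loop-free CCS processes over the action set `Act`:
`p ::= 0 | a.p | p + p`. -/
inductive Proc (Act : Type) : Type
  | nil : Proc Act
  | pre : Act → Proc Act → Proc Act
  | plus : Proc Act → Proc Act → Proc Act

/-- The transition relation: `a.p —a→ p`, and `p₁ + p₂ —a→ p'` iff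
`p₁ —a→ p'` or `p₂ —a→ p'`. -/
inductive Step {Act : Type} : Proc Act → Act → Proc Act → Prop
  | pre (a : Act) (p : Proc Act) : Step (Proc.pre a p) a p
  | plusL : ∀ {p₁ p₂ p' : Proc Act} {a : Act},
      Step p₁ a p' → Step (Proc.plus p₁ p₂) a p'
  | plusR : ∀ {p₁ p₂ p' : Proc Act} {a : Act},
      Step p₂ a p' → Step (Proc.plus p₁ p₂) a p'

/-- HML formulas in negation normal form:
`φ ::= tt | ff | φ∧φ | φ∨φ | ⟨a⟩φ | [a]φ`. -/
inductive HML (Act : Type) : Type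
  | tt : HML Act
  | ff : HML Act
  | conj : HML Act → HML Act → HML Act
  | disj : HML Act → HML Act → HML Act
  | dia : Act → HML Act → HML Act
  | box : Act → HML Act → HML Act

/-- The satisfaction relation `p ⊨ φ`. -/
def Sat {Act : Type} : Proc Act → HML Act → Prop
  | _, HML.tt => True
  | _, HML.ff => False
  | p, HML.conj φ ψ => Sat p φ ∧ Sat p ψ
  | p, HML.disj φ ψ => Sat p φ ∨ Sat p ψ
  | p, HML.dia a φ => ∃ p', Step p a p' ∧ Sat p' φ
  | p, HML.box a φ => ∀ p', Step p a p' → Sat p' φ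

/-- `φ` entails `ψ` iff every process satisfying `φ` satisfies `ψ`. -/
def Entails {Act : Type} (φ ψ : HML Act) : Prop :=
  ∀ p : Proc Act, Sat p φ → Sat p ψ

/-- `R` is a simulation relation. -/
def IsSimulation {Act : Type} (R : Proc Act → Proc Act → Prop) : Prop :=
  ∀ p q, R p q → ∀ a p', Step p a p' → ∃ q', Step q a q' ∧ R p' q'

/-- The simulation preorder `≲_S`: the largest simulation. -/
def Sim {Act : Type} (p q : Proc Act) : Prop :=
  ∃ R, IsSimulation R ∧ R p q

/-- The set `I(p)` of initial actions of a process. -/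
def initials {Act : Type} (p : Proc Act) : Set Act :=
  {a | ∃ p', Step p a p'}

/-- The depth of a process: the length of a longest trace. -/
def depth {Act : Type} : Proc Act → ℕ
  | Proc.nil => 0
  | Proc.pre _ p => depth p + 1
  | Proc.plus p q => max (depth p) (depth q)

/-- The modal depth of a formula: the maximal nesting of modal operators. -/
def md {Act : Type} : HML Act → ℕ
  | HML.tt => 0
  | HML.ff => 0
  | HML.conj φ ψ => max (md φ) (md ψ)
  | HML.disj φ ψ => max (md φ) (md ψ)
  | HML.dia _ φ => md φ + 1
  | HML.box _ φ => md φ + 1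

/-!
If `q` simulates `p` then `depth p ≤ depth q`, since a longest trace of `p` is matched step by
step in `q`; so mutually similar processes have equal depth.
Cutting every trace of a process after `md φ` steps preserves all formulas of modal depth at most
`md φ`, so `φ` has a model of depth at most `md φ`; by hypothesis it simulates `p₁`.
-/

namespace Proc

variable {Act : Type}

theorem not_step_nil {a : Act} {r : Proc Act} : ¬ Step nil a r := nofun

theorem step_pre_iff {a b : Act} {p r : Proc Act} : Step (pre b p) a r ↔ b = a ∧ r = p := by
  constructor
  · rintro ⟨⟩; exact ⟨rfl, rfl⟩
  · rintro ⟨rfl, rfl⟩; exact Step.pre _ _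

theorem step_plus_iff {a : Act} {p q r : Proc Act} :
    Step (plus p q) a r ↔ Step p a r ∨ Step q a r := by
  constructor
  · rintro (_ | ⟨h⟩ | ⟨h⟩)
    exacts [Or.inl h, Or.inr h]
  · rintro (h | h)
    exacts [Step.plusL h, Step.plusR h]

theorem depth_lt_of_step {a : Act} {p r : Proc Act} (h : Step p a r) : depth r < depth p := by
  induction h with
  | pre => exact Nat.lt_succ_self _
  | plusL _ ih => exact lt_max_of_lt_left ih
  | plusR _ ih => exact lt_max_of_lt_right ih

/-- `p.trunc n` keeps the first `n` steps of every trace of `p`. -/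
def trunc : Proc Act → ℕ → Proc Act
  | _, 0 => nil
  | nil, _ + 1 => nil
  | pre a p, n + 1 => pre a (p.trunc n)
  | plus p q, n + 1 => plus (p.trunc (n + 1)) (q.trunc (n + 1))

theorem depth_trunc_le (p : Proc Act) (n : ℕ) : depth (p.trunc n) ≤ n := by
  induction p generalizing n with
  | nil => cases n <;> simp [trunc, depth]
  | pre a p ih => cases n <;> simp [trunc, depth, ih]
  | plus p q ihp ihq => cases n <;> simp [trunc, depth, ihp, ihq]

theorem step_trunc_succ_iff {a : Act} {p r : Proc Act} {n : ℕ} :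
    Step (p.trunc (n + 1)) a r ↔ ∃ p', Step p a p' ∧ r = p'.trunc n := by
  induction p with
  | nil => simp [trunc, not_step_nil]
  | pre b p => simp [trunc, step_pre_iff, and_comm]
  | plus p q ihp ihq => simp [trunc, step_plus_iff, ihp, ihq, or_and_right, exists_or]

end Proc

open Proc

theorem Sat.trunc {Act : Type} {φ : HML Act} {p : Proc Act} {n : ℕ} (h : Sat p φ)
    (hn : md φ ≤ n) : Sat (p.trunc n) φ := by
  induction φ generalizing p n with
  | tt => trivial
  | ff => exact h
  | conj ψ χ ihψ ihχ =>
    rw [md, max_le_iff] at hn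
    exact ⟨ihψ h.1 hn.1, ihχ h.2 hn.2⟩
  | disj ψ χ ihψ ihχ =>
    rw [md, max_le_iff] at hn
    exact h.imp (ihψ · hn.1) (ihχ · hn.2)
  | dia a ψ ih =>
    rw [md] at hn
    obtain ⟨m, rfl⟩ : ∃ m, n = m + 1 := ⟨n - 1, by omega⟩
    obtain ⟨p', hs, hp'⟩ := h
    exact ⟨p'.trunc m, step_trunc_succ_iff.2 ⟨p', hs, rfl⟩, ih hp' (by omega)⟩
  | box a ψ ih =>
    rw [md] at hn
    obtain ⟨m, rfl⟩ : ∃ m, n = m + 1 := ⟨n - 1, by omega⟩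
    intro r hr
    obtain ⟨p', hs, rfl⟩ := step_trunc_succ_iff.1 hr
    exact ih (h p' hs) (by omega)

theorem Sim.exists_step {Act : Type} {p q p' : Proc Act} {a : Act} (h : Sim p q)
    (hs : Step p a p') : ∃ q', Step q a q' ∧ Sim p' q' := by
  obtain ⟨R, hR, hpq⟩ := h
  obtain ⟨q', hq, hR'⟩ := hR p q hpq a p' hs
  exact ⟨q', hq, R, hR, hR'⟩

/-- Unlike `Sim p q`, the hypothesis passes from `p` to its summands, so structural induction on
`p` goes through. -/
theorem depth_le_of_forall_step_sim {Act : Type} {p q : Proc Act}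
    (h : ∀ a p', Step p a p' → ∃ q', Step q a q' ∧ Sim p' q') : depth p ≤ depth q := by
  induction p generalizing q with
  | nil => exact Nat.zero_le _
  | pre a p ih =>
    obtain ⟨q', hs, hsim⟩ := h a p (Step.pre a p)
    exact Nat.succ_le_of_lt ((ih fun _ _ => hsim.exists_step).trans_lt (depth_lt_of_step hs))
  | plus p₁ p₂ ih₁ ih₂ =>
    exact max_le (ih₁ fun a r hr => h a r (Step.plusL hr))
      (ih₂ fun a r hr => h a r (Step.plusR hr))

theorem Sim.depth_le {Act : Type} {p q : Proc Act} (h : Sim p q) : depth p ≤ depth q :=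
  depth_le_of_forall_step_sim fun _ _ => h.exists_step

theorem depth_eq_le_md_general {Act : Type}
    (φ : HML Act) (p₁ p₂ : Proc Act) (h₁ : Sat p₁ φ) (h₂ : Sat p₂ φ)
    (hall : ∀ p q : Proc Act, Sat p φ → Sat q φ → (Sim p q ∧ Sim q p)) :
    depth p₁ = depth p₂ ∧ depth p₁ ≤ md φ := by
  obtain ⟨h₁₂, h₂₁⟩ := hall p₁ p₂ h₁ h₂
  have hcut : Sat (p₁.trunc (md φ)) φ := h₁.trunc le_rfl
  refine ⟨h₁₂.depth_le.antisymm h₂₁.depth_le, ?_⟩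
  calc depth p₁ ≤ depth (p₁.trunc (md φ)) := (hall _ _ h₁ hcut).1.depth_le
    _ ≤ md φ := depth_trunc_le p₁ (md φ)

/-- Let `φ` be an HML formula and `p₁ ⊨ φ`, `p₂ ⊨ φ`. If every two processes
satisfying `φ` are simulation equivalent, then
`depth(p₁) = depth(p₂) ≤ md(φ)`. -/
theorem depth_eq_le_md {Act : Type} [Fintype Act] [Nonempty Act]
    (φ : HML Act) (p₁ p₂ : Proc Act) (h₁ : Sat p₁ φ) (h₂ : Sat p₂ φ)
    (hall : ∀ p q : Proc Act, Sat p φ → Sat q φ → (Sim p q ∧ Sim q p)) :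
    depth p₁ = depth p₂ ∧ depth p₁ ≤ md φ :=
  depth_eq_le_md_general φ p₁ p₂ h₁ h₂ hall
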